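/- arXiv:2411.19394 — 6 statements merged into one kernel-verified Lean document; each statement's English description precedes it below -/
import Mathlib

section
/- Let X_1,…,X_n be {0,1}-valued random variables and p_1,…,p_n ∈ [0,1] be reals with μ = Σ_i p_i, such that for every subset I ⊆ [n] one has Pr[∏_{i∈I} X_i = 1] ≤ ∏_{i∈I} p_i. Then for any δ > 0, Pr[Σ_{i=1}^n X_i > (1+δ)μ] ≤ (e^δ / (1+δ)^{1+δ})^μ. -/
open MeasureTheory ProbabilityTheory

/-- Generalized multiplicative Chernoff upper-tail bound under subset product-domination. -/
theorem stmt2 {Ω : Type*} [MeasurableSpace Ω] (μ : Measure Ω) [IsProbabilityMeasure μ]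
    (n : ℕ) (X : Fin n → Ω → ℝ) (p : Fin n → ℝ)
    (hXmeas : ∀ i, Measurable (X i))
    (hX01 : ∀ i ω, X i ω = 0 ∨ X i ω = 1)
    (hp : ∀ i, p i ∈ Set.Icc (0:ℝ) 1)
    (hdom : ∀ I : Finset (Fin n),
      μ {ω | ∀ i ∈ I, X i ω = 1} ≤ ENNReal.ofReal (∏ i ∈ I, p i))
    (δ : ℝ) (hδ : 0 < δ) :
    (μ {ω | (1 + δ) * (∑ i, p i) < ∑ i, X i ω}).toReal ≤
      (Real.exp δ / (1 + δ) ^ (1 + δ)) ^ (∑ i, p i) := by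
  set μp : ℝ := ∑ i, p i with hμp
  have hμp0 : 0 ≤ μp := Finset.sum_nonneg fun i _ => (hp i).1
  have h1δ : (0:ℝ) < 1 + δ := by linarith
  set t : ℝ := Real.log (1 + δ) with ht
  have hexpt : Real.exp t = 1 + δ := Real.exp_log h1δ
  set a : ℝ := (1 + δ) * μp with ha
  -- pointwise identity: exp (t * S ω) = ∏ (δ * X i ω + 1)
  have hpoint : ∀ ω, Real.exp (t * ∑ i, X i ω) = ∏ i, (δ * X i ω + 1) := by
    intro ω
    rw [Finset.mul_sum, Real.exp_sum]
    refine Finset.prod_congr rfl fun i _ => ?_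
    rcases hX01 i ω with h | h <;> rw [h] <;> simp [hexpt] <;> ring
  -- the moment bound
  have hterm : ∀ I : Finset (Fin n),
      (∫⁻ ω, ENNReal.ofReal ((∏ i ∈ I, δ * X i ω) * ∏ i ∈ Finset.univ \ I, (1:ℝ)) ∂μ)
        ≤ ENNReal.ofReal ((∏ i ∈ I, δ * p i) * ∏ i ∈ Finset.univ \ I, (1:ℝ)) := by
    intro I
    simp only [Finset.prod_const_one, mul_one]
    have hAset : MeasurableSet {ω | ∀ i ∈ I, X i ω = 1} := by
      have : {ω | ∀ i ∈ I, X i ω = 1} = ⋂ i ∈ I, (X i) ⁻¹' {1} := by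
        ext ω; simp
      rw [this]
      exact MeasurableSet.biInter (Set.to_countable _)
        fun i _ => (hXmeas i) (measurableSet_singleton 1)
    have hind : ∀ ω, ENNReal.ofReal (∏ i ∈ I, δ * X i ω) =
        Set.indicator {ω | ∀ i ∈ I, X i ω = 1}
          (fun _ => ENNReal.ofReal (∏ i ∈ I, δ)) ω := by
      intro ω
      by_cases h : ∀ i ∈ I, X i ω = 1
      · rw [Set.indicator_of_mem (show ω ∈ {ω | ∀ i ∈ I, X i ω = 1} from h)]
        congr 1
        exact Finset.prod_congr rfl fun i hi => by rw [h i hi, mul_one]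
      · rw [Set.indicator_of_notMem (show ω ∉ {ω | ∀ i ∈ I, X i ω = 1} from h)]
        push_neg at h
        obtain ⟨i, hi, hXi⟩ := h
        have hX0 : X i ω = 0 := (hX01 i ω).resolve_right hXi
        rw [Finset.prod_eq_zero hi (by rw [hX0, mul_zero]), ENNReal.ofReal_zero]
    calc ∫⁻ ω, ENNReal.ofReal (∏ i ∈ I, δ * X i ω) ∂μ
        = ENNReal.ofReal (∏ i ∈ I, δ) * μ {ω | ∀ i ∈ I, X i ω = 1} := by
          simp_rw [hind]; exact lintegral_indicator_const hAset _
      _ ≤ ENNReal.ofReal (∏ i ∈ I, δ) * ENNReal.ofReal (∏ i ∈ I, p i) :=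
          mul_le_mul_right (hdom I) _
      _ = ENNReal.ofReal (∏ i ∈ I, δ * p i) := by
          rw [← ENNReal.ofReal_mul (Finset.prod_nonneg fun i _ => hδ.le),
            ← Finset.prod_mul_distrib]
  have hmom : (∫⁻ ω, ENNReal.ofReal (Real.exp (t * ∑ i, X i ω)) ∂μ)
      ≤ ENNReal.ofReal (Real.exp (δ * μp)) := by
    have h1 : ∀ ω, ENNReal.ofReal (Real.exp (t * ∑ i, X i ω)) =
        ∑ I ∈ (Finset.univ : Finset (Fin n)).powerset,
          ENNReal.ofReal ((∏ i ∈ I, δ * X i ω) * ∏ i ∈ Finset.univ \ I, (1:ℝ)) := by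
      intro ω
      rw [hpoint ω, Finset.prod_add, ENNReal.ofReal_sum_of_nonneg]
      intro I _
      exact mul_nonneg (Finset.prod_nonneg fun i _ =>
        mul_nonneg hδ.le ((hX01 i ω).elim (fun h => h.ge) (fun h => by rw [h]; norm_num)))
        (by simp)
    calc ∫⁻ ω, ENNReal.ofReal (Real.exp (t * ∑ i, X i ω)) ∂μ
        = ∑ I ∈ (Finset.univ : Finset (Fin n)).powerset,
            ∫⁻ ω, ENNReal.ofReal ((∏ i ∈ I, δ * X i ω) * ∏ i ∈ Finset.univ \ I, (1:ℝ)) ∂μ := by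
          simp_rw [h1]
          exact lintegral_finset_sum _ fun I _ =>
            ((Finset.measurable_prod I fun i _ => (measurable_const.mul (hXmeas i))).mul
              measurable_const).ennreal_ofReal
      _ ≤ ∑ I ∈ (Finset.univ : Finset (Fin n)).powerset,
            ENNReal.ofReal ((∏ i ∈ I, δ * p i) * ∏ i ∈ Finset.univ \ I, (1:ℝ)) :=
          Finset.sum_le_sum fun I _ => hterm I
      _ = ENNReal.ofReal (∏ i, (δ * p i + 1)) := by
          rw [Finset.prod_add, ENNReal.ofReal_sum_of_nonneg]
          intro I _
          exact mul_nonneg (Finset.prod_nonneg fun i _ => mul_nonneg hδ.le (hp i).1) (by simp)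
      _ ≤ ENNReal.ofReal (Real.exp (δ * μp)) := by
          apply ENNReal.ofReal_le_ofReal
          rw [hμp, Finset.mul_sum, Real.exp_sum]
          exact Finset.prod_le_prod (fun i _ => by nlinarith [(hp i).1])
            (fun i _ => Real.add_one_le_exp _)
  -- Markov
  have hmeasS : Measurable fun ω => ENNReal.ofReal (Real.exp (t * ∑ i, X i ω)) :=
    ((measurable_const.mul (Finset.measurable_sum _ fun i _ => hXmeas i)).exp).ennreal_ofReal
  have hmarkov : ENNReal.ofReal (Real.exp (t * a)) *
      μ {ω | a < ∑ i, X i ω} ≤ ∫⁻ ω, ENNReal.ofReal (Real.exp (t * ∑ i, X i ω)) ∂μ := by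
    refine le_trans (mul_le_mul_right (measure_mono ?_) _)
      (mul_meas_ge_le_lintegral₀ hmeasS.aemeasurable _)
    intro ω hω
    simp only [Set.mem_setOf_eq] at hω ⊢
    apply ENNReal.ofReal_le_ofReal
    have htpos : 0 < t := Real.log_pos (by linarith)
    exact (Real.exp_le_exp.2 (by nlinarith)).trans le_rfl
  have hfin : μ {ω | a < ∑ i, X i ω} ≤
      ENNReal.ofReal (Real.exp (δ * μp - t * a)) := by
    rw [Real.exp_sub, ENNReal.ofReal_div_of_pos (Real.exp_pos _)]
    rw [ENNReal.le_div_iff_mul_le (Or.inl (by simp [Real.exp_pos])) (Or.inl ENNReal.ofReal_ne_top)]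
    rw [mul_comm]
    exact hmarkov.trans hmom
  have hrhs : (Real.exp δ / (1 + δ) ^ (1 + δ)) ^ μp = Real.exp (δ * μp - t * a) := by
    rw [Real.rpow_def_of_pos (div_pos (Real.exp_pos _) (Real.rpow_pos_of_pos h1δ _))]
    congr 1
    rw [Real.log_div (Real.exp_ne_zero _) (ne_of_gt (Real.rpow_pos_of_pos h1δ _)),
      Real.log_exp, Real.log_rpow h1δ]
    ring
  rw [hrhs]
  exact ENNReal.toReal_le_of_le_ofReal (Real.exp_pos _).le hfin
end

section
/- Let X_1,…,X_n be {0,1}-valued random variables satisfying Pr[∏_{i∈I} X_i = 1] ≤ ∏_{i∈I} p_i for all I ⊆ [n], and let Z_1,…,Z_n be independent {0,1}-valued random variables with E[Z_i] = p_i. Set X = Σ X_i and Z = Σ Z_i. Then for every positive integer k, E[X^k] ≤ E[Z^k]. -/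
open MeasureTheory ProbabilityTheory


private lemma pow_self01 {x : ℝ} (h : x = 0 ∨ x = 1) {m : ℕ} (hm : m ≠ 0) : x ^ m = x := by
  rcases h with h | h <;> simp [h, zero_pow hm]

/-- integral of a product of 0-1 variables over a finset is the measure of the all-ones event -/
private lemma int_prod_eq {Ω : Type*} [MeasurableSpace Ω] (μ : Measure Ω) [IsProbabilityMeasure μ]
    {n : ℕ} (W : Fin n → Ω → ℝ) (hW : ∀ i, Measurable (W i))
    (h01 : ∀ i ω, W i ω = 0 ∨ W i ω = 1) (I : Finset (Fin n)) :
    ∫ ω, ∏ i ∈ I, W i ω ∂μ = (μ {ω | ∀ i ∈ I, W i ω = 1}).toReal := by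
  have hset : MeasurableSet {ω | ∀ i ∈ I, W i ω = 1} := by
    have : {ω | ∀ i ∈ I, W i ω = 1} = ⋂ i ∈ I, W i ⁻¹' {1} := by
      ext ω; simp [Set.mem_iInter]
    rw [this]
    exact MeasurableSet.biInter I.countable_toSet fun i _ => (hW i) (measurableSet_singleton 1)
  have heq : ∀ ω, (∏ i ∈ I, W i ω) = Set.indicator {ω | ∀ i ∈ I, W i ω = 1} (1 : Ω → ℝ) ω := by
    intro ω
    by_cases h : ∀ i ∈ I, W i ω = 1
    · rw [Set.indicator_of_mem (show ω ∈ {ω | ∀ i ∈ I, W i ω = 1} from h), Pi.one_apply]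
      exact Finset.prod_eq_one fun i hi => h i hi
    · rw [Set.indicator_of_notMem (show ω ∉ {ω | ∀ i ∈ I, W i ω = 1} from h)]
      push_neg at h
      obtain ⟨i, hi, hne⟩ := h
      exact Finset.prod_eq_zero hi ((h01 i ω).resolve_right hne)
  rw [show (fun ω => ∏ i ∈ I, W i ω) = Set.indicator {ω | ∀ i ∈ I, W i ω = 1} (1 : Ω → ℝ)
      from funext heq]
  exact integral_indicator_one hset

/-- Moment domination: if the joint distribution of the {0,1}-variables `X i` is
subset-product-dominated by `p`, and the `Z i` are independent {0,1}-variables with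
means `p i`, then every moment of `∑ X i` is at most the corresponding moment of `∑ Z i`. -/
theorem stmt3 {Ω : Type*} [MeasurableSpace Ω] (μ : Measure Ω) [IsProbabilityMeasure μ]
    (n : ℕ) (X Z : Fin n → Ω → ℝ) (p : Fin n → ℝ)
    (hXmeas : ∀ i, Measurable (X i))
    (hX01 : ∀ i ω, X i ω = 0 ∨ X i ω = 1)
    (hp : ∀ i, p i ∈ Set.Icc (0:ℝ) 1)
    (hdom : ∀ I : Finset (Fin n),
      μ {ω | ∀ i ∈ I, X i ω = 1} ≤ ENNReal.ofReal (∏ i ∈ I, p i))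
    (hZmeas : ∀ i, Measurable (Z i))
    (hZ01 : ∀ i ω, Z i ω = 0 ∨ Z i ω = 1)
    (hZindep : iIndepFun Z μ)
    (hZmean : ∀ i, ∫ ω, Z i ω ∂μ = p i)
    (k : ℕ) (hk : 1 ≤ k) :
    ∫ ω, (∑ i, X i ω) ^ k ∂μ ≤ ∫ ω, (∑ i, Z i ω) ^ k ∂μ := by
  classical
  -- reduce any power product over Fin k to a plain product over the image finset
  have dedup : ∀ (W : Fin n → Ω → ℝ), (∀ i ω, W i ω = 0 ∨ W i ω = 1) →
      ∀ (g : Fin k → Fin n) (ω : Ω),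
      (∏ j, W (g j) ω) = ∏ i ∈ Finset.univ.image g, W i ω := by
    intro W h01 g ω
    rw [Finset.prod_comp (fun i => W i ω) g]
    refine Finset.prod_congr rfl fun i hi => ?_
    apply pow_self01 (h01 i ω)
    obtain ⟨j, -, hj⟩ := Finset.mem_image.mp hi
    exact Finset.card_ne_zero_of_mem (Finset.mem_filter.mpr ⟨Finset.mem_univ j, hj⟩)
  -- integrability of products
  have hint : ∀ (W : Fin n → Ω → ℝ), (∀ i, Measurable (W i)) →
      (∀ i ω, W i ω = 0 ∨ W i ω = 1) → ∀ (g : Fin k → Fin n),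
      Integrable (fun ω => ∏ j, W (g j) ω) μ := by
    intro W hmeas h01 g
    refine Integrable.mono' (integrable_const (1:ℝ))
      (Finset.measurable_prod _ fun j _ => hmeas (g j)).aestronglyMeasurable
      (Filter.Eventually.of_forall fun ω => ?_)
    have h1 : ∀ j, 0 ≤ W (g j) ω ∧ W (g j) ω ≤ 1 := fun j => by
      rcases h01 (g j) ω with h | h <;> simp [h]
    rw [Real.norm_eq_abs, abs_of_nonneg (Finset.prod_nonneg fun j _ => (h1 j).1)]
    exact Finset.prod_le_one (fun j _ => (h1 j).1) (fun j _ => (h1 j).2)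
  -- expand powers
  have expand : ∀ (W : Fin n → Ω → ℝ), (∀ω : Ω, (∑ i, W i ω) ^ k
      = ∑ g : Fin k → Fin n, ∏ j, W (g j) ω) := by
    intro W ω
    rw [Finset.sum_pow' Finset.univ (fun i => W i ω) k]
    rw [← Fintype.sum_equiv (Equiv.refl _) _ _ (fun g => rfl)]
    exact (Finset.sum_subset (Finset.subset_univ _) (fun g _ hg => by
      exact absurd (by simpa [Fintype.mem_piFinset] using Finset.mem_univ g) hg)).symm
  -- value of Z-products via independence
  have hZsing : ∀ i, (μ (Z i ⁻¹' {1})).toReal = p i := by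
    intro i
    have h1 := int_prod_eq μ Z hZmeas hZ01 {i}
    have hset : {ω | ∀ j ∈ ({i} : Finset (Fin n)), Z j ω = 1} = Z i ⁻¹' {1} := by
      ext ω; simp
    rw [hset] at h1
    simp only [Finset.prod_singleton] at h1
    rw [← h1, hZmean i]
  have hZval : ∀ I : Finset (Fin n), ∫ ω, ∏ i ∈ I, Z i ω ∂μ = ∏ i ∈ I, p i := by
    intro I
    rw [int_prod_eq μ Z hZmeas hZ01 I]
    have hset : {ω | ∀ i ∈ I, Z i ω = 1} = ⋂ i ∈ I, Z i ⁻¹' {1} := by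
      ext ω; simp
    rw [hset, hZindep.meas_biInter (fun i _ => ⟨{1}, measurableSet_singleton 1, rfl⟩),
      ENNReal.toReal_prod]
    exact Finset.prod_congr rfl fun i _ => hZsing i
  have eX : ∫ ω, (∑ i, X i ω) ^ k ∂μ = ∑ g : Fin k → Fin n, ∫ ω, ∏ j, X (g j) ω ∂μ := by
    simp_rw [expand X]
    exact integral_finset_sum _ (fun g _ => hint X hXmeas hX01 g)
  have eZ : ∫ ω, (∑ i, Z i ω) ^ k ∂μ = ∑ g : Fin k → Fin n, ∫ ω, ∏ j, Z (g j) ω ∂μ := by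
    simp_rw [expand Z]
    exact integral_finset_sum _ (fun g _ => hint Z hZmeas hZ01 g)
  rw [eX, eZ]
  refine Finset.sum_le_sum fun g _ => ?_
  have hXg : ∫ ω, ∏ j, X (g j) ω ∂μ
      = (μ {ω | ∀ i ∈ Finset.univ.image g, X i ω = 1}).toReal := by
    simp_rw [dedup X hX01 g]
    exact int_prod_eq μ X hXmeas hX01 _
  have hZg : ∫ ω, ∏ j, Z (g j) ω ∂μ = ∏ i ∈ Finset.univ.image g, p i := by
    simp_rw [dedup Z hZ01 g]
    exact hZval _
  rw [hXg, hZg]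
  exact ENNReal.toReal_le_of_le_ofReal
    (Finset.prod_nonneg fun i _ => (hp i).1) (hdom _)
end

section
/- For every real x > 1/e, the Lambert W function satisfies W(x) ≤ ln(2x / (ln(x) + 1)). -/
/-- Hoorfar–Hassani bound on the Lambert W function: if `w · e^w = x` with `x > 1/e`
(so that `w = W(x)` on the principal branch), then `W(x) ≤ ln(2x / (ln x + 1))`. -/
theorem stmt4 (x w : ℝ) (hx : 1 / Real.exp 1 < x) (hw : w * Real.exp w = x) :
    w ≤ Real.log (2 * x / (Real.log x + 1)) := by
  have hxpos : 0 < x := lt_trans (by positivity) hx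
  have hwpos : 0 < w := by
    by_contra h
    push_neg at h
    have : w * Real.exp w ≤ 0 := mul_nonpos_of_nonpos_of_nonneg h (Real.exp_pos w).le
    linarith [hw ▸ this]
  have hlogx : Real.log x = Real.log w + w := by
    rw [← hw, Real.log_mul (ne_of_gt hwpos) (ne_of_gt (Real.exp_pos w)), Real.log_exp]
  have hlx1 : 0 < Real.log x + 1 := by
    have : Real.log (1 / Real.exp 1) < Real.log x := Real.log_lt_log (by positivity) hx
    rw [Real.log_div one_ne_zero (ne_of_gt (Real.exp_pos 1)), Real.log_one, Real.log_exp] at this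
    linarith
  have hlw : Real.log w ≤ w - 1 := Real.log_le_sub_one_of_pos hwpos
  have h2w : Real.log x + 1 ≤ 2 * w := by rw [hlogx]; linarith
  have hle : Real.log (Real.log x + 1) ≤ Real.log (2 * w) :=
    Real.log_le_log hlx1 h2w
  have hsplit : Real.log (2 * x / (Real.log x + 1))
      = Real.log 2 + Real.log x - Real.log (Real.log x + 1) := by
    rw [Real.log_div (by positivity) (ne_of_gt hlx1),
      Real.log_mul two_ne_zero (ne_of_gt hxpos)]
  have h2wlog : Real.log (2 * w) = Real.log 2 + Real.log w :=
    Real.log_mul two_ne_zero (ne_of_gt hwpos)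
  rw [hsplit]
  rw [h2wlog] at hle
  linarith
end

section
/- Let S ⊆ Σ^c with |S| = n and let k ≥ 4. Then the number of k-tuples (x_1,…,x_k) ∈ S^k that form a zero-set (i.e., whose symmetric difference of position characters is empty) is at most 3^c · n^{k-2}. -/
set_option linter.unusedSectionVars false
open Finset

/-- The symmetric difference of a tuple of keys, viewed as sets of position characters. -/
def oddSupport {k c : ℕ} {A : Type*} [Fintype A] [DecidableEq A]
    (x : Fin k → (Fin c → A)) : Finset (Fin c × A) :=
  Finset.univ.filter
    (fun pc => Odd ((Finset.univ.filter (fun j : Fin k => x j pc.1 = pc.2)).card))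

section Tensor
variable {X Y Z : Type*} [Fintype X] [Fintype Y] [Fintype Z]

lemma nat_amgm (a b : ℕ) : 2 * (a * b) ≤ a * a + b * b := by
  zify; nlinarith [sq_nonneg ((a : ℤ) - (b : ℤ))]

lemma sum_comm4 {α β γ δ M : Type*} [Fintype α] [Fintype β] [Fintype γ] [Fintype δ]
    [AddCommMonoid M] (f : α → β → γ → δ → M) :
    ∑ a, ∑ b, ∑ c, ∑ d, f a b c d = ∑ c, ∑ d, ∑ a, ∑ b, f a b c d := by
  trans ∑ c, ∑ a, ∑ b, ∑ d, f a b c d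
  · trans ∑ a, ∑ c, ∑ b, ∑ d, f a b c d
    · exact Finset.sum_congr rfl fun a _ => Finset.sum_comm
    · exact Finset.sum_comm
  · refine Finset.sum_congr rfl fun c _ => ?_
    trans ∑ a, ∑ d, ∑ b, f a b c d
    · exact Finset.sum_congr rfl fun a _ => Finset.sum_comm
    · exact Finset.sum_comm

lemma tensor_bound (F : X → Y → Z → ℕ) (hF : ∀ x y z, F x y z * F x y z = F x y z) :
    (∑ x, ∑ x', ∑ y, ∑ y', (∑ z, F x y z * F x' y' z) * (∑ z, F x y' z * F x' y z))
      ≤ (∑ x, ∑ y, ∑ z, F x y z) ^ 2 := by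
  classical
  set u : X → X → Y → Y → ℕ := fun x x' y y' => ∑ z, F x y z * F x' y' z with hu
  set W : Z → Z → ℕ := fun z z' => ∑ p : X × Y, F p.1 p.2 z * F p.1 p.2 z' with hW
  have step1 : (∑ x, ∑ x', ∑ y, ∑ y', u x x' y y' * u x x' y' y)
      ≤ ∑ x, ∑ x', ∑ y, ∑ y', u x x' y y' * u x x' y y' := by
    have h2 : 2 * (∑ x, ∑ x', ∑ y, ∑ y', u x x' y y' * u x x' y' y)
        ≤ 2 * (∑ x, ∑ x', ∑ y, ∑ y', u x x' y y' * u x x' y y') := by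
      calc 2 * (∑ x, ∑ x', ∑ y, ∑ y', u x x' y y' * u x x' y' y)
          = ∑ x, ∑ x', ∑ y, ∑ y', 2 * (u x x' y y' * u x x' y' y) := by
            simp only [Finset.mul_sum]
        _ ≤ ∑ x, ∑ x', ∑ y, ∑ y', (u x x' y y' * u x x' y y' + u x x' y' y * u x x' y' y) := by
            refine Finset.sum_le_sum fun x _ => Finset.sum_le_sum fun x' _ =>
              Finset.sum_le_sum fun y _ => Finset.sum_le_sum fun y' _ => nat_amgm _ _
        _ = (∑ x, ∑ x', ∑ y, ∑ y', u x x' y y' * u x x' y y')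
            + (∑ x, ∑ x', ∑ y, ∑ y', u x x' y' y * u x x' y' y) := by
            simp only [Finset.sum_add_distrib]
        _ = 2 * (∑ x, ∑ x', ∑ y, ∑ y', u x x' y y' * u x x' y y') := by
            rw [two_mul]
            congr 1
            refine Finset.sum_congr rfl fun x _ => Finset.sum_congr rfl fun x' _ => ?_
            exact Finset.sum_comm
    exact Nat.le_of_mul_le_mul_left h2 (by norm_num)
  have step2 : (∑ x, ∑ x', ∑ y, ∑ y', u x x' y y' * u x x' y y')
      = ∑ z, ∑ z', W z z' * W z z' := by
    have e1 : ∀ x x' y y', u x x' y y' * u x x' y y'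
        = ∑ z, ∑ z', (F x y z * F x y z') * (F x' y' z * F x' y' z') := by
      intro x x' y y'
      rw [hu]
      dsimp only
      rw [Fintype.sum_mul_sum]
      exact Finset.sum_congr rfl fun z _ => Finset.sum_congr rfl fun z' _ => by ring
    calc (∑ x, ∑ x', ∑ y, ∑ y', u x x' y y' * u x x' y y')
        = ∑ x, ∑ x', ∑ y, ∑ y', ∑ z, ∑ z',
            (F x y z * F x y z') * (F x' y' z * F x' y' z') := by
          exact Finset.sum_congr rfl fun x _ => Finset.sum_congr rfl fun x' _ =>
            Finset.sum_congr rfl fun y _ => Finset.sum_congr rfl fun y' _ => e1 x x' y y'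
      _ = ∑ x, ∑ x', ∑ z, ∑ z', ∑ y, ∑ y',
            (F x y z * F x y z') * (F x' y' z * F x' y' z') := by
          exact Finset.sum_congr rfl fun x _ => Finset.sum_congr rfl fun x' _ => sum_comm4 _
      _ = ∑ x, ∑ x', ∑ z, ∑ z',
            (∑ y, F x y z * F x y z') * (∑ y', F x' y' z * F x' y' z') := by
          refine Finset.sum_congr rfl fun x _ => Finset.sum_congr rfl fun x' _ =>
            Finset.sum_congr rfl fun z _ => Finset.sum_congr rfl fun z' _ => ?_
          rw [Fintype.sum_mul_sum]
      _ = ∑ z, ∑ z', ∑ x, ∑ x',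
            (∑ y, F x y z * F x y z') * (∑ y', F x' y' z * F x' y' z') := sum_comm4 _
      _ = ∑ z, ∑ z', W z z' * W z z' := by
          refine Finset.sum_congr rfl fun z _ => Finset.sum_congr rfl fun z' _ => ?_
          rw [← Fintype.sum_mul_sum]
          rw [hW]
          dsimp only
          rw [Fintype.sum_prod_type]
  have step3 : (∑ z, ∑ z', W z z' * W z z') ≤ (∑ z, W z z) * (∑ z, W z z) := by
    rw [Fintype.sum_mul_sum]
    refine Finset.sum_le_sum fun z _ => Finset.sum_le_sum fun z' _ => ?_
    have hcs := Finset.sum_mul_sq_le_sq_mul_sq (univ : Finset (X × Y))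
      (fun p => F p.1 p.2 z) (fun p => F p.1 p.2 z')
    simpa only [hW, sq] using hcs
  have step4 : (∑ z, W z z) = ∑ x, ∑ y, ∑ z, F x y z := by
    calc (∑ z, W z z) = ∑ z, ∑ p : X × Y, F p.1 p.2 z := by
          rw [hW]; dsimp only
          exact Finset.sum_congr rfl fun z _ => Finset.sum_congr rfl fun p _ => hF _ _ _
      _ = ∑ p : X × Y, ∑ z, F p.1 p.2 z := Finset.sum_comm
      _ = ∑ x, ∑ y, ∑ z, F x y z := by rw [Fintype.sum_prod_type]
  calc (∑ x, ∑ x', ∑ y, ∑ y', (∑ z, F x y z * F x' y' z) * (∑ z, F x y' z * F x' y z))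
      = ∑ x, ∑ x', ∑ y, ∑ y', u x x' y y' * u x x' y' y := rfl
    _ ≤ ∑ x, ∑ x', ∑ y, ∑ y', u x x' y y' * u x x' y y' := step1
    _ = ∑ z, ∑ z', W z z' * W z z' := step2
    _ ≤ (∑ z, W z z) * (∑ z, W z z) := step3
    _ = (∑ x, ∑ y, ∑ z, F x y z) ^ 2 := by rw [step4, sq]

end Tensor

section Asm
variable {Alph : Type*} [Fintype Alph] [DecidableEq Alph] {c : ℕ}

lemma fin3_eq_two : ∀ v : Fin 3, ¬ v = 0 → ¬ v = 1 → v = 2 := by decide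

variable (lam : Fin c → Fin 3)

def asmK (x : {i : Fin c // lam i = 0} → Alph) (y : {i : Fin c // lam i = 1} → Alph)
    (z : {i : Fin c // lam i = 2} → Alph) : Fin c → Alph :=
  fun i => if h0 : lam i = 0 then x ⟨i, h0⟩ else if h1 : lam i = 1 then y ⟨i, h1⟩
    else z ⟨i, fin3_eq_two _ h0 h1⟩

def prj0 (k : Fin c → Alph) : {i : Fin c // lam i = 0} → Alph := fun i => k i.1
def prj1 (k : Fin c → Alph) : {i : Fin c // lam i = 1} → Alph := fun i => k i.1
def prj2 (k : Fin c → Alph) : {i : Fin c // lam i = 2} → Alph := fun i => k i.1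

lemma asm_prj (k : Fin c → Alph) : asmK lam (prj0 lam k) (prj1 lam k) (prj2 lam k) = k := by
  funext i
  unfold asmK prj0 prj1 prj2
  split_ifs <;> rfl

variable {lam} in
lemma prj0_asm (x : {i : Fin c // lam i = 0} → Alph) (y : {i : Fin c // lam i = 1} → Alph)
    (z : {i : Fin c // lam i = 2} → Alph) : prj0 lam (asmK lam x y z) = x := by
  funext i
  have h := i.2
  show asmK lam x y z i.1 = x i
  unfold asmK
  rw [dif_pos h]

variable {lam} in
lemma prj1_asm (x : {i : Fin c // lam i = 0} → Alph) (y : {i : Fin c // lam i = 1} → Alph)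
    (z : {i : Fin c // lam i = 2} → Alph) : prj1 lam (asmK lam x y z) = y := by
  funext i
  have h := i.2
  show asmK lam x y z i.1 = y i
  unfold asmK
  rw [dif_neg (by rw [h]; decide), dif_pos h]

variable {lam} in
lemma prj2_asm (x : {i : Fin c // lam i = 0} → Alph) (y : {i : Fin c // lam i = 1} → Alph)
    (z : {i : Fin c // lam i = 2} → Alph) : prj2 lam (asmK lam x y z) = z := by
  funext i
  have h := i.2
  show asmK lam x y z i.1 = z i
  unfold asmK
  rw [dif_neg (by rw [h]; decide), dif_neg (by rw [h]; decide)]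

variable (S : Finset (Fin c → Alph))

def FF (x : {i : Fin c // lam i = 0} → Alph) (y : {i : Fin c // lam i = 1} → Alph)
    (z : {i : Fin c // lam i = 2} → Alph) : ℕ :=
  if asmK lam x y z ∈ S then 1 else 0

lemma FF_mul_self (x y z) : FF lam S x y z * FF lam S x y z = FF lam S x y z := by
  unfold FF; split_ifs <;> rfl

lemma sum_FF : (∑ x, ∑ y, ∑ z, FF lam S x y z) = S.card := by
  classical
  have h1 : (∑ x, ∑ y, ∑ z, FF lam S x y z)
      = ∑ t : ({i : Fin c // lam i = 0} → Alph) × ({i : Fin c // lam i = 1} → Alph)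
          × ({i : Fin c // lam i = 2} → Alph), FF lam S t.1 t.2.1 t.2.2 := by
    rw [Fintype.sum_prod_type]
    exact Finset.sum_congr rfl fun x _ => by rw [Fintype.sum_prod_type]
  rw [h1]
  unfold FF
  rw [Finset.sum_boole]
  norm_cast
  apply Finset.card_bij (fun t _ => asmK lam t.1 t.2.1 t.2.2)
  · intro t ht
    simpa using ht
  · intro t ht t' ht' h
    have e0 := congrArg (prj0 lam) h
    have e1 := congrArg (prj1 lam) h
    have e2 := congrArg (prj2 lam) h
    rw [prj0_asm, prj0_asm] at e0
    rw [prj1_asm, prj1_asm] at e1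
    rw [prj2_asm, prj2_asm] at e2
    exact Prod.ext e0 (Prod.ext e1 e2)
  · intro k hk
    refine ⟨(prj0 lam k, prj1 lam k, prj2 lam k), ?_, asm_prj lam k⟩
    simp [asm_prj lam k, hk]

end Asm

section Char4
variable {Alph : Type*} [DecidableEq Alph]

lemma char4 {α β γ δ : Alph}
    (h : ∀ s : Alph, (((if α = s then (1 : ZMod 2) else 0) + (if β = s then 1 else 0)) +
      ((if γ = s then 1 else 0) + (if δ = s then 1 else 0))) = 0) :
    (α = β ∧ γ = δ) ∨ (α = γ ∧ β = δ) ∨ (α = δ ∧ β = γ) := by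
  rcases eq_or_ne β α with hb | hb <;> rcases eq_or_ne γ α with hg | hg <;>
    rcases eq_or_ne δ α with hd | hd
  · exact Or.inl ⟨hb.symm, hg.trans hd.symm⟩
  · have hh := h α
    rw [if_pos rfl, if_pos hb, if_pos hg, if_neg hd] at hh
    exact absurd hh (by decide)
  · have hh := h α
    rw [if_pos rfl, if_pos hb, if_neg hg, if_pos hd] at hh
    exact absurd hh (by decide)
  · by_cases hdg : δ = γ
    · exact Or.inl ⟨hb.symm, hdg.symm⟩
    · have hh := h γ
      rw [if_neg (Ne.symm hg), if_neg (by rw [hb]; exact Ne.symm hg), if_pos rfl,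
        if_neg hdg] at hh
      exact absurd hh (by decide)
  · have hh := h α
    rw [if_pos rfl, if_neg hb, if_pos hg, if_pos hd] at hh
    exact absurd hh (by decide)
  · by_cases hdb : δ = β
    · exact Or.inr (Or.inl ⟨hg.symm, hdb.symm⟩)
    · have hh := h β
      rw [if_neg (Ne.symm hb), if_pos rfl, if_neg (by rw [hg]; exact Ne.symm hb),
        if_neg hdb] at hh
      exact absurd hh (by decide)
  · by_cases hgb : γ = β
    · exact Or.inr (Or.inr ⟨hd.symm, hgb.symm⟩)
    · have hh := h β
      rw [if_neg (Ne.symm hb), if_pos rfl, if_neg hgb,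
        if_neg (by rw [hd]; exact Ne.symm hb)] at hh
      exact absurd hh (by decide)
  · have hh := h α
    rw [if_pos rfl, if_neg hb, if_neg hg, if_neg hd] at hh
    exact absurd hh (by decide)

end Char4

section Counting
variable {Alph : Type*} [Fintype Alph] [DecidableEq Alph] {c : ℕ}

/-- quadruple condition set for a pattern -/
def NsetQ (lam : Fin c → Fin 3) (S : Finset (Fin c → Alph)) :
    Finset (((Fin c → Alph) × (Fin c → Alph)) × ((Fin c → Alph) × (Fin c → Alph))) :=
  ((S ×ˢ S) ×ˢ (S ×ˢ S)).filter (fun q => ∀ i : Fin c,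
    (lam i = 0 → q.1.1 i = q.1.2 i ∧ q.2.1 i = q.2.2 i) ∧
    (lam i = 1 → q.1.1 i = q.2.1 i ∧ q.1.2 i = q.2.2 i) ∧
    (lam i = 2 → q.1.1 i = q.2.2 i ∧ q.1.2 i = q.2.1 i))

def Uset (lam : Fin c → Fin 3) (S : Finset (Fin c → Alph)) :
    Finset ((({i : Fin c // lam i = 0} → Alph) × ({i : Fin c // lam i = 0} → Alph)) ×
      (({i : Fin c // lam i = 1} → Alph) × ({i : Fin c // lam i = 1} → Alph)) ×
      (({i : Fin c // lam i = 2} → Alph) × ({i : Fin c // lam i = 2} → Alph))) :=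
  univ.filter (fun t =>
    asmK lam t.1.1 t.2.1.1 t.2.2.1 ∈ S ∧ asmK lam t.1.1 t.2.1.2 t.2.2.2 ∈ S ∧
    asmK lam t.1.2 t.2.1.1 t.2.2.2 ∈ S ∧ asmK lam t.1.2 t.2.1.2 t.2.2.1 ∈ S)

lemma Nset_le_Uset (lam : Fin c → Fin 3) (S : Finset (Fin c → Alph)) :
    (NsetQ lam S).card ≤ (Uset lam S).card := by
  classical
  have recon : ∀ q ∈ NsetQ lam S,
      asmK lam (prj0 lam q.1.1) (prj1 lam q.1.1) (prj2 lam q.1.1) = q.1.1 ∧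
      asmK lam (prj0 lam q.1.1) (prj1 lam q.1.2) (prj2 lam q.1.2) = q.1.2 ∧
      asmK lam (prj0 lam q.2.1) (prj1 lam q.1.1) (prj2 lam q.1.2) = q.2.1 ∧
      asmK lam (prj0 lam q.2.1) (prj1 lam q.1.2) (prj2 lam q.1.1) = q.2.2 := by
    intro q hq
    have hc := (mem_filter.mp hq).2
    refine ⟨asm_prj lam _, ?_, ?_, ?_⟩
    · funext i
      unfold asmK prj0 prj1 prj2
      split_ifs with h0 h1
      · exact ((hc i).1 h0).1
      · rfl
      · rfl
    · funext i
      unfold asmK prj0 prj1 prj2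
      split_ifs with h0 h1
      · rfl
      · exact ((hc i).2.1 h1).1
      · exact ((hc i).2.2 (fin3_eq_two _ h0 h1)).2
    · funext i
      unfold asmK prj0 prj1 prj2
      split_ifs with h0 h1
      · exact ((hc i).1 h0).2
      · exact ((hc i).2.1 h1).2
      · exact ((hc i).2.2 (fin3_eq_two _ h0 h1)).1
  apply Finset.card_le_card_of_injOn
    (fun q => ((prj0 lam q.1.1, prj0 lam q.2.1),
      (prj1 lam q.1.1, prj1 lam q.1.2), (prj2 lam q.1.1, prj2 lam q.1.2)))
  · intro q hq
    obtain ⟨r1, r2, r3, r4⟩ := recon q hq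
    have hm := (mem_filter.mp hq).1
    simp only [mem_product] at hm
    simp only [Finset.mem_coe, Uset, mem_filter, mem_univ, true_and]
    exact ⟨by rw [r1]; exact hm.1.1, by rw [r2]; exact hm.1.2,
      by rw [r3]; exact hm.2.1, by rw [r4]; exact hm.2.2⟩
  · intro q hq q' hq' h
    obtain ⟨r1, r2, r3, r4⟩ := recon q (Finset.mem_coe.mp hq)
    obtain ⟨r1', r2', r3', r4'⟩ := recon q' (Finset.mem_coe.mp hq')
    simp only [Prod.mk.injEq] at h
    obtain ⟨⟨e1, e2⟩, ⟨e3, e4⟩, e5, e6⟩ := h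
    have ha : q.1.1 = q'.1.1 := by rw [← r1, ← r1', e1, e3, e5]
    have hb : q.1.2 = q'.1.2 := by rw [← r2, ← r2', e1, e4, e6]
    have hcc : q.2.1 = q'.2.1 := by rw [← r3, ← r3', e2, e3, e6]
    have hd : q.2.2 = q'.2.2 := by rw [← r4, ← r4', e2, e4, e5]
    exact Prod.ext (Prod.ext ha hb) (Prod.ext hcc hd)

lemma Uset_card_eq (lam : Fin c → Fin 3) (S : Finset (Fin c → Alph)) :
    (Uset lam S).card
      = ∑ x, ∑ x', ∑ y, ∑ y', (∑ z, FF lam S x y z * FF lam S x' y' z) *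
          (∑ z, FF lam S x y' z * FF lam S x' y z) := by
  classical
  rw [Uset, Finset.card_filter]
  simp only [Fintype.sum_prod_type]
  refine Finset.sum_congr rfl fun x _ => Finset.sum_congr rfl fun x' _ =>
    Finset.sum_congr rfl fun y _ => Finset.sum_congr rfl fun y' _ => ?_
  rw [Fintype.sum_mul_sum]
  refine Finset.sum_congr rfl fun z _ => Finset.sum_congr rfl fun z' _ => ?_
  unfold FF
  by_cases h1 : asmK lam x y z ∈ S <;> by_cases h2 : asmK lam x y' z' ∈ S <;>
    by_cases h3 : asmK lam x' y z' ∈ S <;> by_cases h4 : asmK lam x' y' z ∈ S <;>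
    simp [h1, h2, h3, h4]

lemma Nset_card_le (lam : Fin c → Fin 3) (S : Finset (Fin c → Alph)) :
    (NsetQ lam S).card ≤ S.card ^ 2 := by
  refine le_trans (Nset_le_Uset lam S) ?_
  rw [Uset_card_eq lam S]
  refine le_trans (tensor_bound (FF lam S) (FF_mul_self lam S)) ?_
  rw [sum_FF]

end Counting

section Main
variable {Alph : Type*} [Fintype Alph] [DecidableEq Alph] {c : ℕ}

def phiK (x : Fin c → Alph) : Fin c × Alph → ZMod 2 :=
  fun pc => if x pc.1 = pc.2 then 1 else 0

lemma negG (g : Fin c × Alph → ZMod 2) : -g = g := by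
  funext pc
  have h : ∀ y : ZMod 2, -y = y := by decide
  exact h _

def W4 (S : Finset (Fin c → Alph)) (τ : Fin c × Alph → ZMod 2) :
    Finset (((Fin c → Alph) × (Fin c → Alph)) × ((Fin c → Alph) × (Fin c → Alph))) :=
  ((S ×ˢ S) ×ˢ (S ×ˢ S)).filter
    (fun q => (phiK q.1.1 + phiK q.1.2) + (phiK q.2.1 + phiK q.2.2) = τ)

def pairCnt (S : Finset (Fin c → Alph)) (g : Fin c × Alph → ZMod 2) : ℕ :=
  ((S ×ˢ S).filter (fun p => phiK p.1 + phiK p.2 = g)).card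

lemma W4_card (S : Finset (Fin c → Alph)) (τ : Fin c × Alph → ZMod 2) :
    (W4 S τ).card = ∑ g : Fin c × Alph → ZMod 2, pairCnt S g * pairCnt S (τ - g) := by
  classical
  rw [Finset.card_eq_sum_card_fiberwise
    (f := fun q => phiK q.1.1 + phiK q.1.2) (t := univ) (fun q _ => mem_univ _)]
  refine Finset.sum_congr rfl fun g _ => ?_
  rw [pairCnt, pairCnt, ← Finset.card_product]
  congr 1
  ext q
  simp only [W4, mem_filter, mem_product]
  constructor
  · rintro ⟨⟨⟨⟨hm1, hm2⟩, hm3, hm4⟩, hsum⟩, hg⟩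
    exact ⟨⟨⟨hm1, hm2⟩, hg⟩, ⟨hm3, hm4⟩, by rw [← hsum, ← hg]; abel⟩
  · rintro ⟨⟨⟨hm1, hm2⟩, hg⟩, ⟨hm3, hm4⟩, h2⟩
    exact ⟨⟨⟨⟨hm1, hm2⟩, hm3, hm4⟩, by rw [hg, h2]; abel⟩, hg⟩

lemma W4_le (S : Finset (Fin c → Alph)) (τ : Fin c × Alph → ZMod 2) :
    (W4 S τ).card ≤ (W4 S 0).card := by
  rw [W4_card, W4_card]
  have hz : ∀ g : Fin c × Alph → ZMod 2, (0 : Fin c × Alph → ZMod 2) - g = g := by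
    intro g; rw [zero_sub, negG]
  simp only [hz]
  have h2 : 2 * (∑ g : Fin c × Alph → ZMod 2, pairCnt S g * pairCnt S (τ - g))
      ≤ 2 * ∑ g : Fin c × Alph → ZMod 2, pairCnt S g * pairCnt S g := by
    calc 2 * (∑ g : Fin c × Alph → ZMod 2, pairCnt S g * pairCnt S (τ - g))
        = ∑ g : Fin c × Alph → ZMod 2, 2 * (pairCnt S g * pairCnt S (τ - g)) := by
          rw [Finset.mul_sum]
      _ ≤ ∑ g : Fin c × Alph → ZMod 2,
            (pairCnt S g * pairCnt S g + pairCnt S (τ - g) * pairCnt S (τ - g)) :=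
          Finset.sum_le_sum fun g _ => nat_amgm _ _
      _ = (∑ g : Fin c × Alph → ZMod 2, pairCnt S g * pairCnt S g)
          + ∑ g : Fin c × Alph → ZMod 2, pairCnt S (τ - g) * pairCnt S (τ - g) := by
          rw [Finset.sum_add_distrib]
      _ = 2 * ∑ g : Fin c × Alph → ZMod 2, pairCnt S g * pairCnt S g := by
          have hre : ∑ g : Fin c × Alph → ZMod 2, pairCnt S (τ - g) * pairCnt S (τ - g)
              = ∑ g : Fin c × Alph → ZMod 2, pairCnt S g * pairCnt S g :=
            Fintype.sum_equiv (Equiv.subLeft τ)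
              (fun g => pairCnt S (τ - g) * pairCnt S (τ - g))
              (fun g => pairCnt S g * pairCnt S g) (fun g => rfl)
          rw [hre, two_mul]
  exact Nat.le_of_mul_le_mul_left h2 (by norm_num)

def LamOf (q : ((Fin c → Alph) × (Fin c → Alph)) × ((Fin c → Alph) × (Fin c → Alph))) :
    Fin c → Fin 3 := fun i =>
  if q.1.1 i = q.1.2 i ∧ q.2.1 i = q.2.2 i then 0
  else if q.1.1 i = q.2.1 i ∧ q.1.2 i = q.2.2 i then 1 else 2

lemma W4_zero_le (S : Finset (Fin c → Alph)) :
    (W4 S 0).card ≤ 3 ^ c * S.card ^ 2 := by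
  classical
  rw [Finset.card_eq_sum_card_fiberwise (f := LamOf) (t := univ) (fun q _ => mem_univ _)]
  have hle : ∀ lam : Fin c → Fin 3,
      ((W4 S 0).filter (fun q => LamOf q = lam)).card ≤ S.card ^ 2 := by
    intro lam
    refine le_trans (Finset.card_le_card ?_) (Nset_card_le lam S)
    intro q hq
    simp only [mem_filter] at hq
    obtain ⟨hqW, hlam⟩ := hq
    rw [W4, mem_filter] at hqW
    obtain ⟨hmem, hsum⟩ := hqW
    rw [NsetQ, mem_filter]
    refine ⟨hmem, fun i => ?_⟩
    have hdis := char4 (α := q.1.1 i) (β := q.1.2 i) (γ := q.2.1 i) (δ := q.2.2 i)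
      (fun s => by
        have := congrFun hsum (i, s)
        simpa [phiK] using this)
    have hli := congrFun hlam i
    refine ⟨fun h0 => ?_, fun h1 => ?_, fun h2 => ?_⟩
    · rw [h0] at hli
      unfold LamOf at hli
      split_ifs at hli with hA hB
      · exact hA
      · exact absurd hli (by decide)
      · exact absurd hli (by decide)
    · rw [h1] at hli
      unfold LamOf at hli
      split_ifs at hli with hA hB
      · exact absurd hli (by decide)
      · exact hB
      · exact absurd hli (by decide)
    · rw [h2] at hli
      unfold LamOf at hli
      split_ifs at hli with hA hB
      · exact absurd hli (by decide)
      · exact absurd hli (by decide)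
      · rcases hdis with h | h | h
        · exact absurd h hA
        · exact absurd h hB
        · exact h
  calc ∑ lam ∈ (univ : Finset (Fin c → Fin 3)),
        ((W4 S 0).filter (fun q => LamOf q = lam)).card
      ≤ ∑ _lam ∈ (univ : Finset (Fin c → Fin 3)), S.card ^ 2 :=
        Finset.sum_le_sum fun lam _ => hle lam
    _ = 3 ^ c * S.card ^ 2 := by
        rw [Finset.sum_const, Finset.card_univ, smul_eq_mul]
        congr 1
        simp [Fintype.card_fun]

def QsetT (k : ℕ) (S : Finset (Fin c → Alph)) (τ : Fin c × Alph → ZMod 2) :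
    Finset (Fin k → (Fin c → Alph)) :=
  univ.filter (fun x => (∀ j, x j ∈ S) ∧ ∑ j, phiK (x j) = τ)

lemma Qset4_card (S : Finset (Fin c → Alph)) (τ : Fin c × Alph → ZMod 2) :
    (QsetT 4 S τ).card = (W4 S τ).card := by
  classical
  apply Finset.card_bij (fun x _ => ((x 0, x 1), (x 2, x 3)))
  · intro x hx
    simp only [QsetT, mem_filter, mem_univ, true_and] at hx
    obtain ⟨hmem, hsum⟩ := hx
    simp only [W4, mem_filter, mem_product]
    refine ⟨⟨⟨hmem 0, hmem 1⟩, hmem 2, hmem 3⟩, ?_⟩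
    rw [Fin.sum_univ_four] at hsum
    rw [← hsum]
    abel
  · intro x hx x' hx' h
    simp only [Prod.mk.injEq] at h
    obtain ⟨⟨h0, h1⟩, h2, h3⟩ := h
    funext j
    fin_cases j <;> assumption
  · intro q hq
    simp only [W4, mem_filter, mem_product] at hq
    obtain ⟨⟨⟨h1, h2⟩, h3, h4⟩, hsum⟩ := hq
    refine ⟨![q.1.1, q.1.2, q.2.1, q.2.2], ?_, ?_⟩
    · simp only [QsetT, mem_filter, mem_univ, true_and]
      constructor
      · intro j; fin_cases j <;> assumption
      · rw [Fin.sum_univ_four]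
        show phiK q.1.1 + phiK q.1.2 + phiK q.2.1 + phiK q.2.2 = τ
        rw [← hsum]
        abel
    · rfl
end Main

section Final
variable {Alph : Type*} [Fintype Alph] [DecidableEq Alph] {c : ℕ}

lemma main_bound (S : Finset (Fin c → Alph)) :
    ∀ k, 4 ≤ k → ∀ τ : Fin c × Alph → ZMod 2,
      (QsetT k S τ).card ≤ 3 ^ c * S.card ^ (k - 2) := by
  intro k hk
  induction k, hk using Nat.le_induction with
  | base =>
    intro τ
    rw [Qset4_card]
    exact le_trans (W4_le S τ) (W4_zero_le S)
  | succ k hk4 ih =>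
    intro τ
    rw [Finset.card_eq_sum_card_fiberwise (f := fun x => x 0) (t := S)
      (fun x hx => ((mem_filter.mp hx).2.1 0))]
    have hfib : ∀ a ∈ S, ((QsetT (k+1) S τ).filter (fun x => x 0 = a)).card
        = (QsetT k S (τ - phiK a)).card := by
      intro a ha
      apply Finset.card_bij (fun x _ => Fin.tail x)
      · intro x hx
        simp only [QsetT, mem_filter, mem_univ, true_and] at hx ⊢
        obtain ⟨⟨hmem, hsum⟩, h0⟩ := hx
        refine ⟨fun j => hmem j.succ, ?_⟩
        rw [Fin.sum_univ_succ, h0] at hsum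
        exact eq_sub_of_add_eq' hsum
      · intro x hx x' hx' h
        have h0 : x 0 = x' 0 := by
          rw [(mem_filter.mp hx).2, (mem_filter.mp hx').2]
        funext j
        rcases Fin.eq_zero_or_eq_succ j with rfl | ⟨j', rfl⟩
        · exact h0
        · exact congrFun h j'
      · intro y hy
        simp only [QsetT, mem_filter, mem_univ, true_and] at hy
        obtain ⟨hmem, hsum⟩ := hy
        refine ⟨Fin.cons a y, ?_, rfl⟩
        simp only [QsetT, mem_filter, mem_univ, true_and]
        refine ⟨⟨fun j => ?_, ?_⟩, rfl⟩
        · rcases Fin.eq_zero_or_eq_succ j with rfl | ⟨j', rfl⟩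
          · simpa using ha
          · simpa using hmem j'
        · rw [Fin.sum_univ_succ]
          simp only [Fin.cons_zero, Fin.cons_succ]
          rw [hsum]
          abel
    calc ∑ a ∈ S, ((QsetT (k+1) S τ).filter (fun x => x 0 = a)).card
        = ∑ a ∈ S, (QsetT k S (τ - phiK a)).card := Finset.sum_congr rfl hfib
      _ ≤ ∑ _a ∈ S, 3 ^ c * S.card ^ (k - 2) :=
          Finset.sum_le_sum fun a _ => ih _
      _ = S.card * (3 ^ c * S.card ^ (k - 2)) := by
          rw [Finset.sum_const, smul_eq_mul]
      _ = 3 ^ c * S.card ^ (k + 1 - 2) := by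
          have he : k + 1 - 2 = (k - 2) + 1 := by omega
          rw [he, pow_succ]
          ring

lemma oddSupport_iff {k : ℕ} (x : Fin k → (Fin c → Alph)) :
    oddSupport x = ∅ ↔ ∑ j, phiK (x j) = 0 := by
  have key : ∀ pc : Fin c × Alph, ((∑ j, phiK (x j)) pc = 0
      ↔ ¬ Odd ((univ.filter (fun j => x j pc.1 = pc.2)).card)) := by
    intro pc
    rw [Finset.sum_apply]
    simp only [phiK]
    rw [Finset.sum_boole]
    rw [ZMod.natCast_eq_zero_iff]
    constructor
    · intro h ho
      rw [Nat.odd_iff] at ho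
      omega
    · intro h
      rw [Nat.odd_iff] at h
      omega
  constructor
  · intro h
    funext pc
    show (∑ j, phiK (x j)) pc = 0
    refine (key pc).mpr ?_
    intro ho
    have : pc ∈ oddSupport x := by
      simp only [oddSupport, mem_filter, mem_univ, true_and]
      exact ho
    rw [h] at this
    exact absurd this (Finset.notMem_empty pc)
  · intro h
    rw [Finset.eq_empty_iff_forall_notMem]
    intro pc hpc
    simp only [oddSupport, mem_filter, mem_univ, true_and] at hpc
    exact (key pc).mp (by rw [h]; rfl) hpc

end Final

/-- The number of `k`-tuples from `S^k` (with `k ≥ 4`) forming a zero-set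
(empty symmetric difference of position characters) is at most `3^c · n^{k-2}`. -/
theorem stmt8 {Alph : Type*} [Fintype Alph] [DecidableEq Alph] (c k : ℕ) (hc : 1 ≤ c)
    (hk : 4 ≤ k) (S : Finset (Fin c → Alph)) :
    (Finset.univ.filter (fun x : Fin k → (Fin c → Alph) =>
        (∀ j, x j ∈ S) ∧ oddSupport x = ∅)).card ≤
      3 ^ c * S.card ^ (k - 2) := by
  classical
  have hset : (Finset.univ.filter (fun x : Fin k → (Fin c → Alph) =>
      (∀ j, x j ∈ S) ∧ oddSupport x = ∅)) = QsetT k S 0 := by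
    ext x
    simp only [QsetT, mem_filter, mem_univ, true_and]
    exact and_congr_right fun _ => oddSupport_iff x
  rw [hset]
  exact main_bound S k hk 0
end

section
/- Fix f with 0 < f ≤ 1/2 and define g(w) = (2^{3w/4 - 2}/3) · ((w-1)!!/(w-2)!!) · f^{w-4} for even w ≥ 4. Then for any even upper limit w_max, the sum of g(w) over even w from 4 to w_max is at most 9. -/
open Finset

private lemma r_lt_one : 5 * Real.sqrt 2 / 8 < 1 := by
  nlinarith [Real.sq_sqrt (by norm_num : (2:ℝ) ≥ 0), Real.sqrt_nonneg 2,
    Real.sqrt_lt_sqrt (by norm_num) (by norm_num : (2:ℝ) < 2.56)]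

private lemma r_nonneg : (0:ℝ) ≤ 5 * Real.sqrt 2 / 8 := by
  positivity

/-- the term at `w = 2k+4` is bounded by `r^k` with `r = 5√2/8`. -/
private lemma term_le (f : ℝ) (hf0 : 0 < f) (hf : f ≤ 1/2) (k : ℕ) :
    (2 : ℝ) ^ ((3 * ((2*k+4 : ℕ) : ℝ)) / 4 - 2) / 3 *
      ((Nat.doubleFactorial (2*k+4 - 1) : ℝ) / (Nat.doubleFactorial (2*k+4 - 2) : ℝ)) *
      f ^ (2*k+4 - 4) ≤ (5 * Real.sqrt 2 / 8) ^ k := by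
  induction k with
  | zero =>
    norm_num [Nat.doubleFactorial]
  | succ k ih =>
    have h1 : 2*(k+1)+4 - 1 = (2*k+3) + 2 := by omega
    have h2 : 2*(k+1)+4 - 2 = (2*k+2) + 2 := by omega
    have h3 : 2*k+4 - 1 = 2*k+3 := by omega
    have h4 : 2*k+4 - 2 = 2*k+2 := by omega
    have h5 : 2*(k+1)+4 - 4 = (2*k+4-4) + 2 := by omega
    rw [h1, h2, h5, Nat.doubleFactorial_add_two (2*k+3), Nat.doubleFactorial_add_two (2*k+2)]
    have hexp : (3 * ((2*(k+1)+4 : ℕ) : ℝ)) / 4 - 2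
        = ((3 * ((2*k+4 : ℕ) : ℝ)) / 4 - 2) + 3/2 := by
      push_cast; ring
    rw [hexp, Real.rpow_add (by norm_num : (0:ℝ) < 2)]
    have h32 : (2:ℝ) ^ ((3:ℝ)/2) = 2 * Real.sqrt 2 := by
      rw [Real.sqrt_eq_rpow, show (3:ℝ)/2 = 1 + 1/2 by norm_num,
        Real.rpow_add (by norm_num : (0:ℝ) < 2), Real.rpow_one]
    have hdf2 : (0:ℝ) < (Nat.doubleFactorial (2*k+2) : ℝ) := by
      exact_mod_cast Nat.pos_of_ne_zero (Nat.doubleFactorial_pos _).ne'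
    have hdf1 : (0:ℝ) ≤ (Nat.doubleFactorial (2*k+3) : ℝ) := by positivity
    -- rewrite as product
    have key : (2:ℝ) ^ ((3 * ((2*k+4 : ℕ) : ℝ)) / 4 - 2) * (2:ℝ) ^ ((3:ℝ)/2) / 3 *
        (((2*k+3+2 : ℕ) * Nat.doubleFactorial (2*k+3) : ℕ) /
          ((2*k+2+2 : ℕ) * Nat.doubleFactorial (2*k+2) : ℕ) : ℝ) * f ^ ((2*k+4-4) + 2)
        = ((2 : ℝ) ^ ((3 * ((2*k+4 : ℕ) : ℝ)) / 4 - 2) / 3 *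
            ((Nat.doubleFactorial (2*k+3) : ℝ) / (Nat.doubleFactorial (2*k+2) : ℝ)) *
            f ^ (2*k+4-4)) *
          ((2:ℝ) ^ ((3:ℝ)/2) * ((2*(k:ℝ)+5) / (2*(k:ℝ)+4)) * f ^ 2) := by
      push_cast
      field_simp
      ring
    rw [key]
    have hfac : (2:ℝ) ^ ((3:ℝ)/2) * ((2*(k:ℝ)+5) / (2*(k:ℝ)+4)) * f ^ 2
        ≤ 5 * Real.sqrt 2 / 8 := by
      rw [h32]
      have hratio : (2*(k:ℝ)+5) / (2*(k:ℝ)+4) ≤ 5/4 := by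
        rw [div_le_div_iff₀ (by positivity) (by norm_num)]
        push_cast; nlinarith [Nat.cast_nonneg (α := ℝ) k]
      have hf2 : f ^ 2 ≤ 1/4 := by nlinarith
      have hs2 : (0:ℝ) ≤ 2 * Real.sqrt 2 := by positivity
      have hA := mul_le_mul_of_nonneg_right
        (mul_le_mul_of_nonneg_left hratio hs2) (sq_nonneg f)
      have hB := mul_le_mul_of_nonneg_left hf2
        (by positivity : (0:ℝ) ≤ 2 * Real.sqrt 2 * (5/4))
      rw [sq] at hA
      nlinarith [Real.sqrt_nonneg 2]
    have hg0 : (0:ℝ) ≤ (2 : ℝ) ^ ((3 * ((2*k+4 : ℕ) : ℝ)) / 4 - 2) / 3 *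
        ((Nat.doubleFactorial (2*k+3) : ℝ) / (Nat.doubleFactorial (2*k+2) : ℝ)) *
        f ^ (2*k+4-4) := by positivity
    have ih' := ih
    rw [h3, h4] at ih'
    calc ((2 : ℝ) ^ ((3 * ((2*k+4 : ℕ) : ℝ)) / 4 - 2) / 3 *
            ((Nat.doubleFactorial (2*k+3) : ℝ) / (Nat.doubleFactorial (2*k+2) : ℝ)) *
            f ^ (2*k+4-4)) *
          ((2:ℝ) ^ ((3:ℝ)/2) * ((2*(k:ℝ)+5) / (2*(k:ℝ)+4)) * f ^ 2)
        ≤ (5 * Real.sqrt 2 / 8) ^ k * (5 * Real.sqrt 2 / 8) := by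
          apply mul_le_mul ih' hfac (by positivity) (by positivity)
      _ = (5 * Real.sqrt 2 / 8) ^ (k+1) := by ring

/-- The sum of `g(w) = (2^(3w/4-2)/3) · ((w-1)‼/(w-2)‼) · f^(w-4)` over even `w`
from `4` to `wmax` is at most `9`, for any `0 < f ≤ 1/2`. -/
theorem stmt9 (f : ℝ) (hf0 : 0 < f) (hf : f ≤ 1/2) (wmax : ℕ) (hwmax : Even wmax) :
    ∑ w ∈ (Finset.Icc 4 wmax).filter (fun w => Even w),
      (2 : ℝ) ^ ((3 * (w : ℝ)) / 4 - 2) / 3 *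
        ((Nat.doubleFactorial (w - 1) : ℝ) / (Nat.doubleFactorial (w - 2) : ℝ)) *
        f ^ (w - 4) ≤ 9 := by
  have himg : (Finset.Icc 4 wmax).filter (fun w => Even w)
      = (Finset.range (wmax/2 - 1)).image (fun k => 2*k+4) := by
    ext w
    simp only [Finset.mem_filter, Finset.mem_Icc, Finset.mem_image, Finset.mem_range,
      Nat.even_iff]
    obtain ⟨m, hm⟩ := hwmax
    constructor
    · rintro ⟨⟨h1, h2⟩, h3⟩
      exact ⟨w/2 - 2, by omega, by omega⟩
    · rintro ⟨k, hk, rfl⟩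
      omega
  rw [himg, Finset.sum_image (by intro a _ b _ h; simp only at h; omega)]
  set r : ℝ := 5 * Real.sqrt 2 / 8 with hr
  calc ∑ k ∈ Finset.range (wmax/2 - 1),
        (2 : ℝ) ^ ((3 * ((2*k+4 : ℕ) : ℝ)) / 4 - 2) / 3 *
          ((Nat.doubleFactorial (2*k+4 - 1) : ℝ) / (Nat.doubleFactorial (2*k+4 - 2) : ℝ)) *
          f ^ (2*k+4 - 4)
      ≤ ∑ k ∈ Finset.range (wmax/2 - 1), r ^ k := by
        apply Finset.sum_le_sum
        intro k _
        exact term_le f hf0 hf k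
    _ ≤ 9 := by
        have h1 : r < 1 := r_lt_one
        have h0 : (0:ℝ) ≤ r := r_nonneg
        have := geom_sum_eq (by linarith : r ≠ 1) (wmax/2 - 1)
        rw [this]
        rw [div_le_iff_of_neg (by linarith : r - 1 < 0)]
        have hrn : (0:ℝ) ≤ r ^ (wmax/2 - 1) := by positivity
        have hs : Real.sqrt 2 ≤ 1.42 := by
          nlinarith [Real.sq_sqrt (by norm_num : (2:ℝ) ≥ 0), Real.sqrt_nonneg 2]
        rw [hr] at *
        nlinarith
  done
end

section
/- For reals f ∈ (0, 1/2], integers i > i₀ ≥ 3 with i ≥ 4, and p_i ∈ (0,1), define i⁺ = i − i₀, k = 2·ln(1/p_i)/(i⁺·ln(i/(e·f))), and η = (2/e)·(i/(e·f))^{i⁺}/(i⁺·ln(i/(e·f))). Then η ≥ exp(W((i/(e·f))^{i⁺}/e)), where W is the Lambert W function, and consequently η·ln(η) ≥ (i/(e·f))^{i⁺}/e. -/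
/-- Key analytic step for the top layers: with `i⁺ = i - i₀`,
`η = (2/e)·(i/(ef))^{i⁺}/(i⁺·ln(i/(ef)))` satisfies `η ≥ exp(W((i/(ef))^{i⁺}/e))`
(where `W` is the principal Lambert W branch, encoded by `w·e^w = (i/(ef))^{i⁺}/e`),
and consequently `η·ln(η) ≥ (i/(ef))^{i⁺}/e`. -/
theorem stmt17 (f : ℝ) (hf0 : 0 < f) (hf : f ≤ 1/2) (i i₀ : ℕ)
    (hi₀ : 3 ≤ i₀) (hlt : i₀ < i) (hi : 4 ≤ i)
    (p : ℝ) (hp0 : 0 < p) (hp1 : p < 1)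
    (k : ℝ)
    (hk : k = 2 * Real.log (1/p) /
      ((i - i₀ : ℕ) * Real.log ((i : ℝ) / (Real.exp 1 * f))))
    (η : ℝ)
    (hη : η = (2 / Real.exp 1) * ((i : ℝ) / (Real.exp 1 * f)) ^ (i - i₀) /
      ((i - i₀ : ℕ) * Real.log ((i : ℝ) / (Real.exp 1 * f))))
    (w : ℝ)
    (hw : w * Real.exp w = ((i : ℝ) / (Real.exp 1 * f)) ^ (i - i₀) / Real.exp 1) :
    Real.exp w ≤ η ∧
      ((i : ℝ) / (Real.exp 1 * f)) ^ (i - i₀) / Real.exp 1 ≤ η * Real.log η := by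
  set e := Real.exp 1 with he
  have he1 : (1:ℝ) < e := by rw [he]; have := Real.exp_one_gt_d9; linarith
  have he3 : e ≤ 3 := by
    have := Real.exp_one_lt_d9; rw [he]; linarith
  set B : ℝ := (i : ℝ) / (e * f) with hB
  have hefpos : 0 < e * f := by positivity
  have hB2 : (2:ℝ) ≤ B := by
    rw [hB, le_div_iff₀ hefpos]
    have : (4:ℝ) ≤ (i:ℝ) := by exact_mod_cast hi
    nlinarith
  have hBpos : 0 < B := lt_of_lt_of_le two_pos hB2
  have hL : 0 < Real.log B := Real.log_pos (by linarith)
  set m : ℕ := i - i₀ with hm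
  have hm1 : 1 ≤ m := Nat.sub_pos_of_lt hlt
  have hmR : (1:ℝ) ≤ (m:ℝ) := by exact_mod_cast hm1
  set x : ℝ := B ^ m with hx
  have hxpos : 0 < x := pow_pos hBpos m
  have hlogx : Real.log x = (m:ℝ) * Real.log B := by
    rw [hx, Real.log_pow]
  have hepos : 0 < e := by linarith
  set y : ℝ := x / e with hy
  have hypos : 0 < y := div_pos hxpos hepos
  have hwy : w * Real.exp w = y := hw
  have hwpos : 0 < w := by
    by_contra h
    push_neg at h
    have : w * Real.exp w ≤ 0 := mul_nonpos_of_nonpos_of_nonneg h (Real.exp_pos w).le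
    linarith
  have hlogy : Real.log y + 1 = (m:ℝ) * Real.log B := by
    rw [hy, Real.log_div (ne_of_gt hxpos) (ne_of_gt hepos), hlogx, he, Real.log_exp]
    ring
  -- ln y = ln w + w
  have hlogy2 : Real.log y = Real.log w + w := by
    rw [← hwy, Real.log_mul (ne_of_gt hwpos) (ne_of_gt (Real.exp_pos w)), Real.log_exp]
  have hlw : Real.log w ≤ w - 1 := Real.log_le_sub_one_of_pos hwpos
  have hkey : (m:ℝ) * Real.log B ≤ 2 * w := by
    rw [← hlogy, hlogy2]; linarith
  have hmL : 0 < (m:ℝ) * Real.log B := by positivity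
  have hηeq : η = 2 * y / ((m:ℝ) * Real.log B) := by
    rw [hη, hy, hx, hB]
    ring
  have h1 : Real.exp w ≤ η := by
    rw [hηeq, le_div_iff₀ hmL]
    calc Real.exp w * ((m:ℝ) * Real.log B) ≤ Real.exp w * (2 * w) := by
          exact mul_le_mul_of_nonneg_left hkey (Real.exp_pos w).le
      _ = 2 * y := by rw [← hwy]; ring
  refine ⟨h1, ?_⟩
  have hew1 : (1:ℝ) ≤ Real.exp w := Real.one_le_exp hwpos.le
  have hη1 : (1:ℝ) ≤ η := le_trans hew1 h1
  have hwlog : w ≤ Real.log η := by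
    calc w = Real.log (Real.exp w) := (Real.log_exp w).symm
      _ ≤ Real.log η := Real.log_le_log (Real.exp_pos w) h1
  calc y = w * Real.exp w := hwy.symm
    _ ≤ Real.log η * η := by
        have := mul_le_mul hwlog h1 (Real.exp_pos w).le
          (le_trans hwpos.le hwlog)
        exact this
    _ = η * Real.log η := mul_comm _ _
end
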